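/- Fix θ₀, θ_R ∈ S_{2π} and z ∈ ρ(H_{θ₀,θ_R}), and let u_{+,θ₀,θ_R}(z,·) and u_{−,θ₀,θ_R}(z,·) be the unique solutions of −u'' + Vu = zu with u,u' ∈ AC([0,R]) satisfying γ_{θ₀,θ_R}(u_{+,θ₀,θ_R}(z,·)) = (1,0) and γ_{θ₀,θ_R}(u_{−,θ₀,θ_R}(z,·)) = (0,1). Then their Wronskian satisfies W(u_{+,θ₀,θ_R}(z,·), u_{−,θ₀,θ_R}(z,·)) = Δ(z,R,θ₀,θ_R)^{-1}. -/

import Mathlib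

open MeasureTheory Filter
open scoped InnerProductSpace

noncomputable section
open scoped Classical


variable {H : Type*} [NormedAddCommGroup H] [InnerProductSpace ℂ H] [CompleteSpace H]

/-- `T` is the (bounded, everywhere defined) inverse of `A - z·I`. -/
def IsResolvent (A : H →ₗ.[ℂ] H) (z : ℂ) (T : H →L[ℂ] H) : Prop :=
  (∀ x : H, ∃ hx : T x ∈ A.domain, A ⟨T x, hx⟩ - z • T x = x) ∧
  ∀ u : A.domain, T (A u - z • (u : H)) = (u : H)

/-- The resolvent set of an unbounded operator. -/
def resolventSetP (A : H →ₗ.[ℂ] H) : Set ℂ := {z | ∃ T, IsResolvent A z T}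

/-- The spectrum of an unbounded operator. -/
def specP (A : H →ₗ.[ℂ] H) : Set ℂ := (resolventSetP A)ᶜ

/-- The resolvent `(A - z·I)⁻¹` (junk value `0` off the resolvent set). -/
def res (A : H →ₗ.[ℂ] H) (z : ℂ) : H →L[ℂ] H :=
  if h : ∃ T, IsResolvent A z T then h.choose else 0

/-- The operator `A + t·I` (same domain). -/
def shiftP (A : H →ₗ.[ℂ] H) (t : ℂ) : H →ₗ.[ℂ] H :=
  ⟨A.domain, A.toFun + t • A.domain.subtype⟩

/-- `A` is of positive type: `(-∞,0] ⊆ ρ(A)` and `sup_{t ≥ 0} ‖(1+t)(A+t)⁻¹‖ < ∞`. -/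
def IsPositiveTypeP (A : H →ₗ.[ℂ] H) : Prop :=
  (∀ x : ℝ, x ≤ 0 → (x : ℂ) ∈ resolventSetP A) ∧
  ∃ M : ℝ, ∀ t : ℝ, 0 ≤ t → (1 + t) * ‖res A (-(t : ℂ))‖ ≤ M

/-- The open sector of half-opening angle `ω` about the positive reals
(`(0,∞)` for `ω = 0`). -/
def sectorS (ω : ℝ) : Set ℂ :=
  if ω = 0 then (fun x : ℝ => (x : ℂ)) '' Set.Ioi 0
  else {z : ℂ | z ≠ 0 ∧ |Complex.arg z| < ω}

/-- `A` is sectorial of angle `ω`. -/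
def IsSectorialP (A : H →ₗ.[ℂ] H) (ω : ℝ) : Prop :=
  specP A ⊆ closure (sectorS ω) ∧
  ∀ ω' : ℝ, ω < ω' → ω' < Real.pi →
    ∃ M : ℝ, ∀ z ∈ (closure (sectorS ω'))ᶜ, ‖z‖ * ‖res A z‖ ≤ M

/-- The shifted sector `-t₀ + S_ω`. -/
def shiftedSector (t0 ω : ℝ) : Set ℂ := (fun w => -(t0 : ℂ) + w) '' sectorS ω

/-- The region `ℂ \ closure (-t₀ + S_ω)`. -/
def offSector (t0 ω : ℝ) : Set ℂ := (closure (shiftedSector t0 ω))ᶜ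

/-- The bounded operator `(A - z·I)^{-1/2}`, defined by the Balakrishnan-type formula
`(1/π) ∫₀^∞ t^{-1/2} (A + (t - z)·I)⁻¹ dt`. -/
def negSqrt (A : H →ₗ.[ℂ] H) (z : ℂ) : H →L[ℂ] H :=
  ((Real.pi : ℂ))⁻¹ • ∫ t in Set.Ioi (0 : ℝ), ((Real.sqrt t : ℂ))⁻¹ • res A (z - t)

/-- Trace-class (nuclear) bounded operators, characterized by
`sup { ∑ |⟨eᵢ, T fᵢ⟩| : (eᵢ), (fᵢ) finite orthonormal families } < ∞`. -/
def IsTraceClass (T : H →L[ℂ] H) : Prop :=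
  ∃ C : ℝ, ∀ (n : ℕ) (e f : Fin n → H), Orthonormal ℂ e → Orthonormal ℂ f →
    ∑ i, ‖⟪e i, T (f i)⟫_ℂ‖ ≤ C

/-- The trace norm `‖T‖₁`. -/
def traceNorm (T : H →L[ℂ] H) : ℝ :=
  sSup {s : ℝ | ∃ (n : ℕ) (e f : Fin n → H), Orthonormal ℂ e ∧ Orthonormal ℂ f ∧
    s = ∑ i, ‖⟪e i, T (f i)⟫_ℂ‖}

/-- The trace of a (trace-class) operator, computed in the Hilbert basis `b`. -/
def traceH (b : HilbertBasis ℕ ℂ H) (T : H →L[ℂ] H) : ℂ :=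
  ∑' n, ⟪(b n : H), T (b n)⟫_ℂ

/-- The Fredholm determinant `det (I + T)` (for `T` trace class), computed as the limit of
finite-section determinants along the Hilbert basis `b`. -/
def detI (b : HilbertBasis ℕ ℂ H) (T : H →L[ℂ] H) : ℂ :=
  limUnder atTop fun F : Finset ℕ =>
    Matrix.det (Matrix.of fun i j : F =>
      (if (i : ℕ) = (j : ℕ) then (1 : ℂ) else 0) + ⟪(b (i : ℕ) : H), T (b (j : ℕ))⟫_ℂ)


/-! ### One-dimensional Schrödinger operators on `[0,R]` -/

/-- The underlying Hilbert space `L²((0,R); dx)`. -/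
abbrev SchSp (Rr : ℝ) :=
  MeasureTheory.Lp ℂ 2 (MeasureTheory.volume.restrict (Set.Ioo (0 : ℝ) Rr))

/-- `u` (with derivative `du`) solves `-u'' + V u = z u` on `[0,R]`, with
`u, u' ∈ AC([0,R])` (the second derivative being encoded in integrated form). -/
def SolODE (Rr : ℝ) (V : ℝ → ℂ) (z : ℂ) (u du : ℝ → ℂ) : Prop :=
  (∀ x ∈ Set.Icc (0 : ℝ) Rr, HasDerivWithinAt u (du x) (Set.Icc (0 : ℝ) Rr) x) ∧
  ∀ x ∈ Set.Icc (0 : ℝ) Rr, du x = du 0 + ∫ t in (0 : ℝ)..x, (V t - z) * u t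

/-- The boundary trace `γ_{θ₀,θ_R}(u) = (cos θ₀ u(0) + sin θ₀ u'(0),
cos θ_R u(R) - sin θ_R u'(R))`. -/
def bdryC (Rr : ℝ) (t0 tR : ℂ) (u du : ℝ → ℂ) : Fin 2 → ℂ :=
  ![Complex.cos t0 * u 0 + Complex.sin t0 * du 0,
    Complex.cos tR * u Rr - Complex.sin tR * du Rr]

/-- `g` (with derivative `dg`) is an absolutely continuous representative of `f ∈ L²`
satisfying `-g'' + V g - z g = h` (in integrated form, with `h₀` a representative of
`h ∈ L²`); i.e. `f` represents `(H - z)⁻¹ h`. -/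
def SolvesAt (Rr : ℝ) (V : ℝ → ℂ) (z : ℂ) (f h : SchSp Rr) (g dg : ℝ → ℂ) : Prop :=
  (∀ᵐ x ∂(MeasureTheory.volume.restrict (Set.Ioo (0 : ℝ) Rr)), f x = g x) ∧
  (∀ x ∈ Set.Icc (0 : ℝ) Rr, HasDerivWithinAt g (dg x) (Set.Icc (0 : ℝ) Rr) x) ∧
  ∃ h0 : ℝ → ℂ,
    (∀ᵐ x ∂(MeasureTheory.volume.restrict (Set.Ioo (0 : ℝ) Rr)), h x = h0 x) ∧
    ∀ x ∈ Set.Icc (0 : ℝ) Rr,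
      dg x = dg 0 + ∫ t in (0 : ℝ)..x, (V t * g t - z * g t - h0 t)

/-- `Hop` is the Schrödinger operator `H_{θ₀,θ_R} = -d²/dx² + V` in `L²((0,R); dx)` with
separated boundary conditions `γ_{θ₀,θ_R}(g) = 0`, characterized through its graph. -/
def IsSchrodingerOp (Rr : ℝ) (V : ℝ → ℂ) (t0 tR : ℂ)
    (Hop : SchSp Rr →ₗ.[ℂ] SchSp Rr) : Prop :=
  ∀ f h : SchSp Rr, (f, h) ∈ Hop.graph ↔
    ∃ g dg : ℝ → ℂ, SolvesAt Rr V 0 f h g dg ∧ bdryC Rr t0 tR g dg = 0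

/-- `Λ` is the boundary data map `Λ_{θ₀,θ_R}^{θ₀',θ_R'}(z)`: for every solution `u` of
`-u'' + Vu = zu`, `Λ` maps `γ_{θ₀,θ_R}(u)` to `γ_{θ₀',θ_R'}(u)`. -/
def IsBoundaryDataMap (Rr : ℝ) (V : ℝ → ℂ) (t0 tR t0' tR' : ℂ) (z : ℂ)
    (Λ : Matrix (Fin 2) (Fin 2) ℂ) : Prop :=
  ∀ u du : ℝ → ℂ, SolODE Rr V z u du →
    Λ.mulVec (bdryC Rr t0 tR u du) = bdryC Rr t0' tR' u du

/-- `G` is the map `γ_{θ₀',θ_R'} ∘ (Hop - z)⁻¹ : L²((0,R)) → ℂ²`. -/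
def IsBdryResolventMap (Rr : ℝ) (V : ℝ → ℂ) (t0' tR' : ℂ) (z : ℂ)
    (Hop : SchSp Rr →ₗ.[ℂ] SchSp Rr)
    (G : SchSp Rr →L[ℂ] EuclideanSpace ℂ (Fin 2)) : Prop :=
  ∀ (h : SchSp Rr) (g dg : ℝ → ℂ), SolvesAt Rr V z (res Hop z h) h g dg →
    ∀ i : Fin 2, G h i = bdryC Rr t0' tR' g dg i

/-- The region `ℂ \ [c, ∞)`. -/
def offCut (c : ℝ) : Set ℂ := {z : ℂ | z.im ≠ 0 ∨ z.re < c}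

/-- `N` is the family `z ↦ (Hop - z)^{-1/2}`, defined via the spectral theorem with branch
cut along `[c, ∞)` (`c = inf σ(Hop)`): analytic on `ℂ \ [c,∞)`, squaring to the resolvent,
and positive (self-adjoint) for real `z < c`. -/
def IsSqrtResFam (Rr : ℝ) (Hop : SchSp Rr →ₗ.[ℂ] SchSp Rr) (c : ℝ)
    (N : ℂ → (SchSp Rr →L[ℂ] SchSp Rr)) : Prop :=
  (∀ z ∈ offCut c, (N z).comp (N z) = res Hop z) ∧
  (∀ x : ℝ, x < c →
    (∀ v w : SchSp Rr, ⟪N (x : ℂ) v, w⟫_ℂ = ⟪v, N (x : ℂ) w⟫_ℂ) ∧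
    ∀ v : SchSp Rr, 0 ≤ (⟪v, N (x : ℂ) v⟫_ℂ).re) ∧
  DifferentiableOn ℂ N (offCut c)

/-- The infimum `e₀ = inf(σ(Hop) ∪ σ(Hop'))`. -/
def einf (Rr : ℝ) (Hop Hop' : SchSp Rr →ₗ.[ℂ] SchSp Rr) : ℝ :=
  sInf {x : ℝ | (x : ℂ) ∈ specP Hop ∪ specP Hop'}

/-- The infimum of the spectrum of a single operator. -/
def einf1 (Rr : ℝ) (Hop : SchSp Rr →ₗ.[ℂ] SchSp Rr) : ℝ :=
  sInf {x : ℝ | (x : ℂ) ∈ specP Hop}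


/-!
The Wronskian of two solutions is absolutely continuous with vanishing derivative almost
everywhere, hence constant. The solution `v = cos θ₀ φ - sin θ₀ θ` satisfies the boundary
condition at `0`, so `W(u₋, v) = 0` and `W(v, u₊) = -1`; the three-term identity
`W(u₊,u₋) v + W(u₋,v) u₊ + W(v,u₊) u₋ = 0` (and its differentiated form) then gives
`u₋ = W(u₊,u₋) v` at `R`, and the boundary condition of `u₋` at `R` reads `W(u₊,u₋) Δ = 1`.
-/

open Set

theorem AbsolutelyContinuousOnInterval.of_dist_le {X Y : Type*} [PseudoMetricSpace X]
    [PseudoMetricSpace Y] {f : ℝ → X} {g : ℝ → Y} {a b : ℝ}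
    (hg : AbsolutelyContinuousOnInterval g a b)
    (hfg : ∀ x ∈ uIcc a b, ∀ y ∈ uIcc a b, dist (f x) (f y) ≤ dist (g x) (g y)) :
    AbsolutelyContinuousOnInterval f a b := by
  refine squeeze_zero' (Eventually.of_forall fun _ => Finset.sum_nonneg fun _ _ => dist_nonneg)
    ?_ hg
  filter_upwards [eventually_inf_principal.mpr (Eventually.of_forall fun _ h => h)]
    with ⟨n, I⟩ ⟨hI, _⟩
  exact Finset.sum_le_sum fun i hi => hfg _ (hI i hi).1 _ (hI i hi).2

theorem IntervalIntegrable.absolutelyContinuousOnInterval_intervalIntegral' {E : Type*}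
    [NormedAddCommGroup E] [NormedSpace ℝ E] {f : ℝ → E} {a b c : ℝ}
    (hf : IntervalIntegrable f volume a b) (hc : c ∈ uIcc a b) :
    AbsolutelyContinuousOnInterval (fun x => ∫ t in c..x, f t) a b := by
  refine (hf.norm.absolutelyContinuousOnInterval_intervalIntegral hc).of_dist_le
    fun x hx y hy => ?_
  have hsub : ∀ {s t}, s ∈ uIcc a b → t ∈ uIcc a b → IntervalIntegrable f volume s t :=
    fun hs ht => hf.mono_set (uIcc_subset_uIcc hs ht)
  rw [dist_eq_norm, dist_eq_norm, intervalIntegral.integral_interval_sub_left (hsub hc hx)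
    (hsub hc hy), intervalIntegral.integral_interval_sub_left (hsub hc hx).norm
    (hsub hc hy).norm, Real.norm_eq_abs]
  exact intervalIntegral.norm_integral_le_abs_integral_norm

namespace SolODE

variable {Rr : ℝ} {V : ℝ → ℂ} {z : ℂ} {u du v dv : ℝ → ℂ}

theorem continuousOn (hu : SolODE Rr V z u du) : ContinuousOn u (Icc 0 Rr) :=
  fun x hx => (hu.1 x hx).continuousWithinAt

theorem hasDerivAt (hu : SolODE Rr V z u du) {x : ℝ} (hx : x ∈ Ioo 0 Rr) :
    HasDerivAt u (du x) x :=
  (hu.1 x (Ioo_subset_Icc_self hx)).hasDerivAt (Icc_mem_nhds hx.1 hx.2)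

theorem integrableOn_potential_mul (hV : IntegrableOn V (Ioo 0 Rr)) (hu : SolODE Rr V z u du) :
    IntegrableOn (fun t => (V t - z) * u t) (Icc 0 Rr) := by
  have hVz : IntegrableOn (fun t => V t - z) (Icc 0 Rr) := by
    rw [integrableOn_Icc_iff_integrableOn_Ioo]
    exact hV.sub (integrableOn_const measure_Ioo_lt_top.ne)
  exact hVz.mul_continuousOn hu.continuousOn isCompact_Icc

theorem intervalIntegrable_potential_mul (hV : IntegrableOn V (Ioo 0 Rr))
    (hu : SolODE Rr V z u du) {x : ℝ} (hx : x ∈ Icc 0 Rr) :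
    IntervalIntegrable (fun t => (V t - z) * u t) volume 0 x := by
  refine ((hu.integrableOn_potential_mul hV).mono_set ?_).intervalIntegrable
  rw [uIcc_of_le hx.1]
  exact Icc_subset_Icc le_rfl hx.2

theorem const_mul (c : ℂ) (hu : SolODE Rr V z u du) :
    SolODE Rr V z (fun x => c * u x) (fun x => c * du x) := by
  refine ⟨fun x hx => (hu.1 x hx).const_mul c, fun x hx => ?_⟩
  simp_rw [mul_left_comm _ c, intervalIntegral.integral_const_mul, hu.2 x hx]
  ring

theorem sub (hV : IntegrableOn V (Ioo 0 Rr)) (hu : SolODE Rr V z u du)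
    (hv : SolODE Rr V z v dv) :
    SolODE Rr V z (fun x => u x - v x) (fun x => du x - dv x) := by
  refine ⟨fun x hx => (hu.1 x hx).sub (hv.1 x hx), fun x hx => ?_⟩
  simp_rw [mul_sub, intervalIntegral.integral_sub (hu.intervalIntegrable_potential_mul hV hx)
    (hv.intervalIntegrable_potential_mul hV hx), hu.2 x hx, hv.2 x hx]
  ring

theorem absolutelyContinuousOnInterval_deriv (hV : IntegrableOn V (Ioo 0 Rr)) (hR : 0 ≤ Rr)
    (hu : SolODE Rr V z u du) : AbsolutelyContinuousOnInterval du 0 Rr := by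
  have hprim := (hu.intervalIntegrable_potential_mul hV ⟨hR, le_rfl⟩
    ).absolutelyContinuousOnInterval_intervalIntegral' left_mem_uIcc
  refine hprim.of_dist_le fun x hx y hy => ?_
  rw [uIcc_of_le hR] at hx hy
  rw [hu.2 x hx, hu.2 y hy, dist_add_left]

theorem absolutelyContinuousOnInterval (hV : IntegrableOn V (Ioo 0 Rr)) (hR : 0 ≤ Rr)
    (hu : SolODE Rr V z u du) : AbsolutelyContinuousOnInterval u 0 Rr := by
  obtain ⟨C, hC⟩ := isCompact_Icc.exists_bound_of_continuousOn
    (uIcc_of_le hR ▸ (hu.absolutelyContinuousOnInterval_deriv hV hR).continuousOn)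
  refine LipschitzOnWith.absolutelyContinuousOnInterval (K := C.toNNReal) ?_
  rw [uIcc_of_le hR]
  refine (convex_Icc 0 Rr).lipschitzOnWith_of_nnnorm_hasDerivWithin_le hu.1 fun x hx => ?_
  rw [← NNReal.coe_le_coe, coe_nnnorm]
  exact (hC x hx).trans (Real.le_coe_toNNReal C)

theorem ae_hasDerivAt_deriv (hV : IntegrableOn V (Ioo 0 Rr)) (hR : 0 ≤ Rr)
    (hu : SolODE Rr V z u du) : ∀ᵐ x, x ∈ Ioo 0 Rr → HasDerivAt du ((V x - z) * u x) x := by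
  filter_upwards [(hu.intervalIntegrable_potential_mul hV ⟨hR, le_rfl⟩).ae_hasDerivAt_integral]
    with x hderiv hx
  rw [uIcc_of_le hR] at hderiv
  refine ((hderiv (Ioo_subset_Icc_self hx) 0 (left_mem_Icc.2 hR)).const_add (du 0)
    ).congr_of_eventuallyEq ?_
  filter_upwards [Icc_mem_nhds hx.1 hx.2] with y hy using hu.2 y hy

end SolODE

def wronskian (u du v dv : ℝ → ℂ) (x : ℝ) : ℂ := u x * dv x - du x * v x

theorem SolODE.wronskian_eq {Rr : ℝ} {V : ℝ → ℂ} {z : ℂ} {u du v dv : ℝ → ℂ}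
    (hV : IntegrableOn V (Ioo 0 Rr)) (hu : SolODE Rr V z u du) (hv : SolODE Rr V z v dv)
    {x : ℝ} (hx : x ∈ Icc 0 Rr) : wronskian u du v dv x = wronskian u du v dv 0 := by
  have hR : 0 ≤ Rr := hx.1.trans hx.2
  have hW : AbsolutelyContinuousOnInterval (wronskian u du v dv) 0 Rr :=
    ((hu.absolutelyContinuousOnInterval hV hR).fun_smul
      (hv.absolutelyContinuousOnInterval_deriv hV hR)).sub
      ((hu.absolutelyContinuousOnInterval_deriv hV hR).fun_smul
        (hv.absolutelyContinuousOnInterval hV hR))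
  have hne : ∀ a : ℝ, ∀ᵐ y ∂volume, y ≠ a := fun a => by simp [ae_iff, measure_singleton]
  obtain ⟨C, hC⟩ := hW.const_of_ae_hasDerivAt_zero <| by
    filter_upwards [hu.ae_hasDerivAt_deriv hV hR, hv.ae_hasDerivAt_deriv hV hR, hne 0, hne Rr]
      with y hdu hdv hy0 hyR hy
    rw [uIcc_of_le hR] at hy
    have hy' : y ∈ Ioo 0 Rr := ⟨lt_of_le_of_ne hy.1 hy0.symm, lt_of_le_of_ne hy.2 hyR⟩
    exact (((hu.hasDerivAt hy').mul (hdv hy')).sub ((hdu hy').mul (hv.hasDerivAt hy'))).congr_deriv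
      (by ring)
  rw [uIcc_of_le hR] at hC
  rw [hC x hx, hC 0 ⟨le_rfl, hR⟩]

theorem statement8
    (Rr : ℝ) (V : ℝ → ℂ)
    (hV : MeasureTheory.IntegrableOn V (Set.Ioo 0 Rr) MeasureTheory.volume)
    (t0 tR : ℂ)
    (z : ℂ)
    (up dup um dum th dth ph dph : ℝ → ℂ)
    (hup : SolODE Rr V z up dup) (hum : SolODE Rr V z um dum)
    (hbp : bdryC Rr t0 tR up dup = ![1, 0])
    (hbm : bdryC Rr t0 tR um dum = ![0, 1])
    (hth : SolODE Rr V z th dth) (hph : SolODE Rr V z ph dph)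
    (hth0 : th 0 = 1) (hdth0 : dth 0 = 0) (hph0 : ph 0 = 0) (hdph0 : dph 0 = 1) :
    ∀ x ∈ Set.Icc (0 : ℝ) Rr,
      up x * dum x - dup x * um x =
        (Complex.cos t0 * Complex.cos tR * ph Rr - Complex.cos t0 * Complex.sin tR * dph Rr -
            Complex.sin t0 * Complex.cos tR * th Rr +
            Complex.sin t0 * Complex.sin tR * dth Rr)⁻¹ := by
  intro x hx
  have hRmem : Rr ∈ Icc (0 : ℝ) Rr := ⟨hx.1.trans hx.2, le_rfl⟩
  have hbp0 : Complex.cos t0 * up 0 + Complex.sin t0 * dup 0 = 1 := by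
    simpa [bdryC] using congrFun hbp 0
  have hbm0 : Complex.cos t0 * um 0 + Complex.sin t0 * dum 0 = 0 := by
    simpa [bdryC] using congrFun hbm 0
  have hbmR : Complex.cos tR * um Rr - Complex.sin tR * dum Rr = 1 := by
    simpa [bdryC] using congrFun hbm 1
  have hv := (hph.const_mul (Complex.cos t0)).sub hV (hth.const_mul (Complex.sin t0))
  have hW_um_v := hum.wronskian_eq hV hv hRmem
  have hW_v_up := hv.wronskian_eq hV hup hRmem
  have hW_up_um := hup.wronskian_eq hV hum hRmem
  simp only [wronskian, hth0, hdth0, hph0, hdph0] at hW_um_v hW_v_up hW_up_um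
  show wronskian up dup um dum x = _
  rw [hup.wronskian_eq hV hum hx, wronskian]
  set W₀ := up 0 * dum 0 - dup 0 * um 0
  have hum_R : W₀ * (Complex.cos t0 * ph Rr - Complex.sin t0 * th Rr) = um Rr := by
    linear_combination (-(Complex.cos t0 * ph Rr - Complex.sin t0 * th Rr)) * hW_up_um
      - up Rr * (hW_um_v + hbm0) - um Rr * (hW_v_up - hbp0)
  have hdum_R : W₀ * (Complex.cos t0 * dph Rr - Complex.sin t0 * dth Rr) = dum Rr := by
    linear_combination (-(Complex.cos t0 * dph Rr - Complex.sin t0 * dth Rr)) * hW_up_um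
      - dup Rr * (hW_um_v + hbm0) - dum Rr * (hW_v_up - hbp0)
  exact eq_inv_of_mul_eq_one_left
    (by linear_combination Complex.cos tR * hum_R - Complex.sin tR * hdum_R + hbmR)
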